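/- (Combes–Thomas estimate for long-range operators) Let H = A + V on ℓ²(ℤ) where (Au)_n = Σ_k a_{n-k}u_k with |a_k| ≤ A₁e^{-a|k|} (a, A₁ > 0, a_{-k} = conj(a_k)) and V a bounded real potential. Let z ∈ ℂ with η = dist(z, σ(H)) ≥ 1. Then there exist C, c > 0 depending only on A₁, a, ‖V‖_∞ such that |((H − z)⁻¹δ_j, δ_n)| ≤ C e^{-c|n − j|} for all j, n ∈ ℤ. -/

import Mathlib

open scoped InnerProductSpace

noncomputable section

abbrev L2 := lp (fun _ : ℤ => ℂ) 2

def dl (n : ℤ) : L2 := lp.single 2 n (1 : ℂ)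

/-!
Write `H` as the operator with matrix `a (n - k) + V n δ_{nk}`; the symmetry of this matrix makes
`H` self-adjoint, so `‖(H - z)⁻¹‖ ≤ 1` when `z` is at distance `≥ 1` from `σ(H)`. Conjugate by the
multiplication operator `W = e^{c φ}`, where `φ = min (|· - j|, |n - j|)` is 1-Lipschitz and, being
truncated, keeps `W` bounded. The matrix entries of `W H W⁻¹ - H` are those of `H` times
`e^{c (φ n - φ k)} - 1`, of modulus at most `c |n - k| e^{c |n - k|}`; against the decay
`e^{-α |n - k|}` of `a` this gives `‖W H W⁻¹ - H‖ ≤ 1/2` for small `c`, so by a Neumann series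
`‖W (H - z)⁻¹ W⁻¹‖ ≤ 2`, and the `(n, j)` entry of this operator is `e^{c |n - j|}` times that of
`(H - z)⁻¹`.
-/

open scoped ENNReal

theorem IsStarNormal.norm_inverse_sub_smul_one_le {A : Type*} [CStarAlgebra A] {a : A}
    [IsStarNormal a] {z : ℂ} {r : ℝ} (hr : 0 < r) (hz : ∀ w ∈ spectrum ℂ a, r ≤ ‖z - w‖) :
    IsUnit (a - z • 1) ∧ ‖Ring.inverse (a - z • 1)‖ ≤ r⁻¹ := by
  have hunit : IsUnit (a - z • 1) := by
    have hz' : z ∉ spectrum ℂ a := fun h => by simpa [hr.not_ge] using hz z h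
    have := (spectrum.notMem_iff.1 hz').neg
    rwa [neg_sub, Algebra.algebraMap_eq_smul_one] at this
  refine ⟨hunit, ?_⟩
  obtain ⟨T, hT⟩ := hunit
  have : IsStarNormal (T : A) := hT ▸ (Commute.isStarNormal_sub (by
    rw [star_smul, star_one]; exact (Commute.one_right a).smul_right _))
  suffices (‖(↑T⁻¹ : A)‖₊ : ℝ≥0∞) ≤ ENNReal.ofReal r⁻¹ by
    rw [← hT, Ring.inverse_unit]
    rwa [← enorm_eq_nnnorm, ← ofReal_norm, ENNReal.ofReal_le_ofReal_iff (by positivity)] at this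
  rw [← IsStarNormal.spectralRadius_eq_nnnorm]
  refine iSup₂_le fun μ hμ => ?_
  have hμ0 : μ ≠ 0 := fun h => Units.zero_notMem_spectrum ℂ _ (h ▸ hμ)
  have hinv : μ⁻¹ ∈ spectrum ℂ (T : A) := by
    simpa using (spectrum.inv_mem_iff (r := Units.mk0 μ hμ0) (a := T⁻¹)).1 hμ
  rw [hT, ← Algebra.algebraMap_eq_smul_one, ← spectrum.sub_singleton_eq] at hinv
  obtain ⟨w, hw, _, rfl, hwz⟩ := hinv
  have : r ≤ ‖μ‖⁻¹ := by rw [← norm_inv, ← hwz, norm_sub_rev]; exact hz w hw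
  rw [← enorm_eq_nnnorm, ← ofReal_norm]
  exact ENNReal.ofReal_le_ofReal ((le_inv_comm₀ hr (norm_pos_iff.2 hμ0)).1 this)

theorem Units.norm_inv_le_of_norm_sub_le {R : Type*} [NormedRing R] [NormOneClass R]
    [CompleteSpace R] (S T : Rˣ) (h : ‖(↑T⁻¹ : R)‖ * ‖(S - T : R)‖ ≤ 1 / 2) :
    ‖(↑S⁻¹ : R)‖ ≤ 2 * ‖(↑T⁻¹ : R)‖ := by
  set x : R := -((T⁻¹ : Rˣ) * (S - T : R))
  have hx : ‖x‖ ≤ 1 / 2 := (norm_neg _).trans_le ((norm_mul_le _ _).trans h)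
  have hx1 : ‖x‖ < 1 := hx.trans_lt one_half_lt_one
  have hS : S = T * Units.oneSub x hx1 := Units.ext (by simp [x, mul_sub, ← mul_assoc])
  have hgeom : ‖(↑(Units.oneSub x hx1)⁻¹ : R)‖ ≤ 2 := by
    change ‖∑' n : ℕ, x ^ n‖ ≤ 2
    refine (tsum_geometric_le_of_norm_lt_one x hx1).trans ?_
    rw [norm_one, sub_self, zero_add, inv_le_comm₀ (by linarith) two_pos]
    linarith
  calc ‖(↑S⁻¹ : R)‖ = ‖(↑(Units.oneSub x hx1)⁻¹ : R) * ↑T⁻¹‖ := by simp [hS, mul_inv_rev]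
    _ ≤ 2 * ‖(↑T⁻¹ : R)‖ := (norm_mul_le _ _).trans (by gcongr)

theorem Units.conj_sub_smul_one_sub {𝕜 R : Type*} [CommSemiring 𝕜] [Ring R] [Algebra 𝕜 R]
    (W : Rˣ) (H : R) (z : 𝕜) : W * (H - z • 1) * ↑W⁻¹ - (H - z • 1) = W * H * ↑W⁻¹ - H := by
  rw [mul_sub, sub_mul, mul_smul_comm, mul_one, smul_mul_assoc, Units.mul_inv,
    sub_sub_sub_cancel_right]

theorem summable_abs_pow_mul_exp_neg_mul_abs (k : ℕ) {r : ℝ} (hr : 0 < r) :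
    Summable fun m : ℤ => |(m : ℝ)| ^ k * Real.exp (-r * |(m : ℝ)|) := by
  apply Summable.of_nat_of_neg <;> simpa using Real.summable_pow_mul_exp_neg_nat_mul k hr

namespace L2

lemma norm_dl (j : ℤ) : ‖dl j‖ = 1 :=
  (lp.norm_single (E := fun _ : ℤ => ℂ) two_pos j 1).trans norm_one

lemma norm_inner_dl_right (u : L2) (n : ℤ) : ‖⟪u, dl n⟫_ℂ‖ = ‖u n‖ := by
  simp [dl, lp.inner_single_right]

instance : Nontrivial L2 := nontrivial_of_ne (dl 0) 0 (ne_zero_of_norm_ne_zero (by simp [norm_dl]))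

def translate (m : ℤ) : L2 →ₗᵢ[ℂ] L2 where
  toFun u := ⟨fun n => u (n - m), (memℓp_gen_iff (by norm_num)).2 <|
    (Equiv.subRight m).summable_iff.2 ((memℓp_gen_iff (by norm_num)).1 u.2)⟩
  map_add' _ _ := rfl
  map_smul' _ _ := rfl
  norm_map' u := by
    simp only [lp.norm_eq_tsum_rpow (by norm_num : 0 < (2 : ℝ≥0∞).toReal)]
    congr 1
    exact (Equiv.subRight m).tsum_eq fun n => ‖u n‖ ^ (2 : ℝ≥0∞).toReal

def mulOp (d : ℤ → ℂ) {M : ℝ} (hd : ∀ n, ‖d n‖ ≤ M) : L2 →L[ℂ] L2 :=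
  lp.mapCLM 2 (fun n => d n • ContinuousLinearMap.id ℂ ℂ) ((norm_nonneg _).trans (hd 0))
    fun n => (norm_smul_le _ _).trans (by simpa using hd n)

@[simp] lemma mulOp_apply (d : ℤ → ℂ) {M : ℝ} (hd : ∀ n, ‖d n‖ ≤ M) (u : L2) (n : ℤ) :
    mulOp d hd u n = d n * u n := rfl

lemma norm_mulOp_le (d : ℤ → ℂ) {M : ℝ} (hd : ∀ n, ‖d n‖ ≤ M) : ‖mulOp d hd‖ ≤ M :=
  lp.norm_mapCLM_le _ _ _ _

lemma mulOp_single (d : ℤ → ℂ) {M : ℝ} (hd : ∀ n, ‖d n‖ ≤ M) (j : ℤ) :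
    mulOp d hd (dl j) = d j • dl j := by
  ext n
  rcases eq_or_ne n j with rfl | h
  · simp [dl]
  · simp [dl, h]

lemma summable_kernel_mul {K : ℤ → ℤ → ℂ} {b : ℤ → ℝ} (hK : ∀ n k, ‖K n k‖ ≤ b (n - k))
    (hb : Summable b) (u : L2) (n : ℤ) : Summable fun k => K n k * u k :=
  ((Equiv.subLeft n).summable_iff.2 hb |>.mul_right ‖u‖).of_norm_bounded fun k =>
    (norm_mul_le _ _).trans (mul_le_mul (hK n k) (lp.norm_apply_le_norm two_ne_zero u k)
      (norm_nonneg _) ((norm_nonneg _).trans (hK n k)))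

section Kernel

variable (K : ℤ → ℤ → ℂ) {b : ℤ → ℝ} (hK : ∀ n k, ‖K n k‖ ≤ b (n - k))

def kernelDiagOp (m : ℤ) : L2 →L[ℂ] L2 :=
  mulOp (fun n => K n (n - m)) (M := b m) (fun n => by simpa using hK n (n - m)) ∘L
    (translate m).toContinuousLinearMap

/-- Summing diagonal by diagonal, each diagonal being a weighted shift of norm `≤ b m`, bounds the
norm by `∑ b m` without a Schur test. -/
def kernelOp : L2 →L[ℂ] L2 := ∑' m, kernelDiagOp K hK m

variable {K}

@[simp] lemma kernelDiagOp_apply (m : ℤ) (u : L2) (n : ℤ) :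
    kernelDiagOp K hK m u n = K n (n - m) * u (n - m) := rfl

lemma norm_kernelDiagOp_le (m : ℤ) : ‖kernelDiagOp K hK m‖ ≤ b m :=
  calc ‖kernelDiagOp K hK m‖ ≤ b m * 1 :=
        (ContinuousLinearMap.opNorm_comp_le _ _).trans <|
          mul_le_mul (norm_mulOp_le _ _) (translate m).norm_toContinuousLinearMap_le
            (norm_nonneg _) ((norm_nonneg _).trans (by simpa using hK m 0))
    _ = b m := mul_one _

lemma inner_kernelDiagOp (hherm : ∀ n k, K k n = starRingEnd ℂ (K n k)) (m : ℤ) (u v : L2) :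
    ⟪kernelDiagOp K hK m u, v⟫_ℂ = ⟪u, kernelDiagOp K hK (-m) v⟫_ℂ := by
  rw [lp.inner_eq_tsum, lp.inner_eq_tsum, ← (Equiv.addRight m).tsum_eq]
  refine tsum_congr fun k => ?_
  simp [hherm k (k + m)]
  ring

lemma summable_kernelDiagOp (hb : Summable b) : Summable (kernelDiagOp K hK) :=
  hb.of_norm_bounded (norm_kernelDiagOp_le hK)

lemma norm_kernelOp_le (hb : Summable b) : ‖kernelOp K hK‖ ≤ ∑' m, b m :=
  tsum_of_norm_bounded hb.hasSum (norm_kernelDiagOp_le hK)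

lemma kernelOp_apply (hb : Summable b) (u : L2) (n : ℤ) :
    kernelOp K hK u n = ∑' k, K n k * u k := by
  have h := ((summable_kernelDiagOp hK hb).hasSum.mapL
    (ContinuousLinearMap.apply ℂ L2 u)).mapL (lp.evalCLM ℂ (fun _ : ℤ => ℂ) 2 n)
  exact h.tsum_eq.symm.trans ((Equiv.subLeft n).tsum_eq fun k => K n k * u k)

lemma isSelfAdjoint_kernelOp (hb : Summable b)
    (hherm : ∀ n k, K k n = starRingEnd ℂ (K n k)) :
    IsSelfAdjoint (kernelOp K hK) := by
  rw [ContinuousLinearMap.isSelfAdjoint_iff_isSymmetric]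
  intro u v
  have hs := (summable_kernelDiagOp hK hb).hasSum
  calc ⟪kernelOp K hK u, v⟫_ℂ = ∑' m, ⟪kernelDiagOp K hK m u, v⟫_ℂ :=
        ((hs.mapL (ContinuousLinearMap.apply ℂ L2 u)).mapL (innerSLFlip ℂ v)).tsum_eq.symm
    _ = ∑' m, ⟪u, kernelDiagOp K hK (-m) v⟫_ℂ :=
        tsum_congr fun m => inner_kernelDiagOp hK hherm m u v
    _ = ∑' m, ⟪u, kernelDiagOp K hK m v⟫_ℂ :=
        (Equiv.neg ℤ).tsum_eq fun m => ⟪u, kernelDiagOp K hK m v⟫_ℂ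
    _ = ⟪u, kernelOp K hK v⟫_ℂ :=
        ((hs.mapL (ContinuousLinearMap.apply ℂ L2 v)).mapL (innerSL ℂ u)).tsum_eq

end Kernel

lemma norm_cexp_ofReal_mul_le (c : ℝ) {φ : ℤ → ℝ} {D : ℝ} (hφ : ∀ k, |φ k| ≤ D) (k : ℤ) :
    ‖Complex.exp ↑(c * φ k)‖ ≤ Real.exp (|c| * D) := by
  rw [Complex.norm_exp_ofReal, Real.exp_le_exp]
  exact (le_abs_self _).trans (abs_mul c (φ k) ▸ mul_le_mul_of_nonneg_left (hφ k) (abs_nonneg c))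

def expWeight (c : ℝ) (φ : ℤ → ℝ) {D : ℝ} (hφ : ∀ k, |φ k| ≤ D) : (L2 →L[ℂ] L2)ˣ where
  val := mulOp (fun k => Complex.exp ↑(c * φ k)) (norm_cexp_ofReal_mul_le c hφ)
  inv := mulOp (fun k => Complex.exp ↑(-c * φ k)) (norm_cexp_ofReal_mul_le (-c) hφ)
  val_inv := by
    ext u n
    simp [← mul_assoc, ← Complex.exp_add]
  inv_val := by
    ext u n
    simp [← mul_assoc, ← Complex.exp_add]

section expWeight

variable (c : ℝ) {φ : ℤ → ℝ} {D : ℝ} (hφ : ∀ k, |φ k| ≤ D)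

@[simp] lemma expWeight_apply (u : L2) (n : ℤ) :
    (expWeight c φ hφ : L2 →L[ℂ] L2) u n = Complex.exp ↑(c * φ n) * u n := rfl

@[simp] lemma expWeight_inv_apply (u : L2) (n : ℤ) :
    (↑(expWeight c φ hφ)⁻¹ : L2 →L[ℂ] L2) u n = Complex.exp ↑(-c * φ n) * u n := rfl

lemma norm_cexp_sub_one_le (x : ℝ) : ‖Complex.exp x - 1‖ ≤ |x| * Real.exp |x| := by
  simpa using Complex.norm_exp_sub_sum_le_norm_mul_exp x 1

theorem norm_expWeight_conj_kernelOp_sub_le {K : ℤ → ℤ → ℂ} {b : ℤ → ℝ}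
    (hK : ∀ n k, ‖K n k‖ ≤ b (n - k)) (hb : Summable b) (hφL : LipschitzWith 1 φ)
    (hb' : Summable fun m : ℤ => b m * (|c| * |(m : ℝ)| * Real.exp (|c| * |(m : ℝ)|))) :
    ‖(expWeight c φ hφ : L2 →L[ℂ] L2) * kernelOp K hK * ↑(expWeight c φ hφ)⁻¹ - kernelOp K hK‖ ≤
      ∑' m : ℤ, b m * (|c| * |(m : ℝ)| * Real.exp (|c| * |(m : ℝ)|)) := by
  set K' : ℤ → ℤ → ℂ := fun n k => K n k * (Complex.exp ↑(c * (φ n - φ k)) - 1)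
  set b' : ℤ → ℝ := fun m => b m * (|c| * |(m : ℝ)| * Real.exp (|c| * |(m : ℝ)|))
  have hK' : ∀ n k, ‖K' n k‖ ≤ b' (n - k) := by
    intro n k
    have hlip : |c * (φ n - φ k)| ≤ |c| * |((n - k : ℤ) : ℝ)| := by
      rw [abs_mul, Int.cast_sub]
      refine mul_le_mul_of_nonneg_left ?_ (abs_nonneg c)
      simpa [Real.dist_eq, Int.dist_eq] using hφL.dist_le_mul n k
    refine (norm_mul_le _ _).trans (mul_le_mul (hK n k) ?_ (norm_nonneg _)
      ((norm_nonneg _).trans (hK n k)))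
    exact (norm_cexp_sub_one_le _).trans (by gcongr)
  have hconj : (expWeight c φ hφ : L2 →L[ℂ] L2) * kernelOp K hK * ↑(expWeight c φ hφ)⁻¹ -
      kernelOp K hK = kernelOp K' hK' := by
    ext u n
    simp only [sub_apply, mul_apply_eq_comp, lp.coeFn_sub, Pi.sub_apply, expWeight_apply,
      expWeight_inv_apply, kernelOp_apply hK hb, kernelOp_apply hK' hb']
    rw [← tsum_mul_left, sub_eq_iff_eq_add,
      ← (summable_kernel_mul hK' hb' u n).tsum_add (summable_kernel_mul hK hb u n)]
    refine tsum_congr fun k => ?_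
    have hexp : Complex.exp ↑(c * (φ n - φ k)) =
        Complex.exp ↑(c * φ n) * Complex.exp ↑(-c * φ k) := by
      rw [← Complex.exp_add]; push_cast; ring_nf
    simp only [K', hexp]
    ring
  rw [hconj]
  exact norm_kernelOp_le hK' hb'

lemma expWeight_single (j : ℤ) :
    (expWeight c φ hφ : L2 →L[ℂ] L2) (dl j) = Complex.exp ↑(c * φ j) • dl j :=
  mulOp_single _ (norm_cexp_ofReal_mul_le c hφ) j

theorem norm_inv_apply_single_le (T : (L2 →L[ℂ] L2)ˣ)
    (h : ‖(↑T⁻¹ : L2 →L[ℂ] L2)‖ *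
      ‖(expWeight c φ hφ : L2 →L[ℂ] L2) * T * ↑(expWeight c φ hφ)⁻¹ - T‖ ≤ 1 / 2) (j n : ℤ) :
    ‖(↑T⁻¹ : L2 →L[ℂ] L2) (dl j) n‖ ≤
      2 * ‖(↑T⁻¹ : L2 →L[ℂ] L2)‖ * Real.exp (c * (φ j - φ n)) := by
  set W := expWeight c φ hφ
  set S := W * T * W⁻¹
  have hS : ‖(↑S⁻¹ : L2 →L[ℂ] L2)‖ ≤ 2 * ‖(↑T⁻¹ : L2 →L[ℂ] L2)‖ :=
    Units.norm_inv_le_of_norm_sub_le S T (by simpa [S] using h)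
  have hT : (↑T⁻¹ : L2 →L[ℂ] L2) = ↑W⁻¹ * ↑S⁻¹ * ↑W := by simp [S, mul_inv_rev, mul_assoc]
  calc ‖(↑T⁻¹ : L2 →L[ℂ] L2) (dl j) n‖
      = Real.exp (-c * φ n) * Real.exp (c * φ j) * ‖(↑S⁻¹ : L2 →L[ℂ] L2) (dl j) n‖ := by
        simp [hT, mul_apply_eq_comp, W, expWeight_single, Complex.norm_exp]
        ring
    _ ≤ Real.exp (-c * φ n) * Real.exp (c * φ j) * (‖(↑S⁻¹ : L2 →L[ℂ] L2)‖ * ‖dl j‖) := by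
        gcongr
        exact (lp.norm_apply_le_norm two_ne_zero _ n).trans ((↑S⁻¹ : L2 →L[ℂ] L2).le_opNorm _)
    _ ≤ 2 * ‖(↑T⁻¹ : L2 →L[ℂ] L2)‖ * Real.exp (c * (φ j - φ n)) := by
        rw [norm_dl, mul_one, mul_comm, ← Real.exp_add,
          show -c * φ n + c * φ j = c * (φ j - φ n) by ring]
        gcongr

end expWeight

end L2

section Hamiltonian

variable {a : ℤ → ℂ} {V : ℤ → ℝ}

def hamiltonianKernel (a : ℤ → ℂ) (V : ℤ → ℝ) (n k : ℤ) : ℂ :=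
  a (n - k) + if n = k then (V n : ℂ) else 0

lemma norm_hamiltonianKernel_le {β : ℤ → ℝ} (ha : ∀ m, ‖a m‖ ≤ β m) {Vbd : ℝ}
    (hV : ∀ n, |V n| ≤ Vbd) (n k : ℤ) :
    ‖hamiltonianKernel a V n k‖ ≤ (β + Pi.single 0 Vbd : ℤ → ℝ) (n - k) := by
  rw [Pi.add_apply, Pi.single_apply]
  refine (norm_add_le _ _).trans (add_le_add (ha _) ?_)
  split_ifs with h h' h'
  · simpa using hV n
  · exact absurd (sub_eq_zero.2 h) h'
  · exact absurd (sub_eq_zero.1 h') h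
  · simp

lemma hamiltonianKernel_swap (hsa : ∀ k, a (-k) = starRingEnd ℂ (a k)) (n k : ℤ) :
    hamiltonianKernel a V k n = starRingEnd ℂ (hamiltonianKernel a V n k) := by
  rw [hamiltonianKernel, hamiltonianKernel, ← neg_sub, hsa]
  split_ifs with h h' h'
  · subst h; simp
  · exact absurd h.symm h'
  · exact absurd h'.symm h
  · simp

lemma eq_kernelOp_hamiltonianKernel {β : ℤ → ℝ} (ha : ∀ m, ‖a m‖ ≤ β m) (hβ : Summable β)
    {Vbd : ℝ} (hV : ∀ n, |V n| ≤ Vbd) {H : L2 →L[ℂ] L2}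
    (hH : ∀ (u : L2) (n : ℤ), H u n = (∑' k, a (n - k) * u k) + (V n : ℂ) * u n) :
    H = L2.kernelOp (hamiltonianKernel a V) (norm_hamiltonianKernel_le ha hV) := by
  ext u n
  have hdiag : ∀ k, (if n = k then (V n : ℂ) else 0) * u k =
      (Pi.single n ((V n : ℂ) * u n) : ℤ → ℂ) k := by
    intro k
    rcases eq_or_ne k n with rfl | h
    · simp
    · simp [h, Ne.symm h]
  rw [hH, L2.kernelOp_apply _ (hβ.add (hasSum_pi_single 0 Vbd).summable)]
  simp only [hamiltonianKernel, add_mul, hdiag]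
  rw [(L2.summable_kernel_mul (fun n k => ha (n - k)) hβ u n).tsum_add
    (hasSum_pi_single n _).summable, tsum_pi_single]

lemma isSelfAdjoint_of_hamiltonian {β : ℤ → ℝ} (ha : ∀ m, ‖a m‖ ≤ β m) (hβ : Summable β)
    (hsa : ∀ k, a (-k) = starRingEnd ℂ (a k)) {Vbd : ℝ} (hV : ∀ n, |V n| ≤ Vbd)
    {H : L2 →L[ℂ] L2}
    (hH : ∀ (u : L2) (n : ℤ), H u n = (∑' k, a (n - k) * u k) + (V n : ℂ) * u n) :
    IsSelfAdjoint H :=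
  eq_kernelOp_hamiltonianKernel ha hβ hV hH ▸
    L2.isSelfAdjoint_kernelOp _ (hβ.add (hasSum_pi_single 0 Vbd).summable)
      (hamiltonianKernel_swap hsa)

theorem norm_expWeight_conj_hamiltonian_sub_le {A₁ α Vbd c D : ℝ} {φ : ℤ → ℝ}
    (hα : 0 < α) (ha : ∀ k : ℤ, ‖a k‖ ≤ A₁ * Real.exp (-α * |(k : ℝ)|))
    (hV : ∀ n, |V n| ≤ Vbd) {H : L2 →L[ℂ] L2}
    (hH : ∀ (u : L2) (n : ℤ), H u n = (∑' k, a (n - k) * u k) + (V n : ℂ) * u n)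
    (hc : 0 ≤ c) (hcα : c ≤ α / 2) (hφ : ∀ k, |φ k| ≤ D) (hφL : LipschitzWith 1 φ) :
    ‖(L2.expWeight c φ hφ : L2 →L[ℂ] L2) * H * ↑(L2.expWeight c φ hφ)⁻¹ - H‖ ≤
      c * A₁ * ∑' m : ℤ, |(m : ℝ)| * Real.exp (-(α / 2) * |(m : ℝ)|) := by
  set β : ℤ → ℝ := fun m => A₁ * Real.exp (-α * |(m : ℝ)|)
  have hβ : Summable β := by
    simpa [β] using (summable_abs_pow_mul_exp_neg_mul_abs 0 hα).mul_left A₁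
  have hS : Summable fun m : ℤ => |(m : ℝ)| * Real.exp (-(α / 2) * |(m : ℝ)|) := by
    simpa using summable_abs_pow_mul_exp_neg_mul_abs 1 (half_pos hα)
  have hA₁ : 0 ≤ A₁ := by simpa using (norm_nonneg _).trans (ha 0)
  -- the potential sits on the diagonal `m = 0`, where the conjugation factor vanishes
  have hterm : ∀ m : ℤ, (β + Pi.single 0 Vbd : ℤ → ℝ) m * (|c| * |(m : ℝ)| *
      Real.exp (|c| * |(m : ℝ)|)) = c * A₁ * (|(m : ℝ)| * Real.exp ((c - α) * |(m : ℝ)|)) := by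
    intro m
    rcases eq_or_ne m 0 with rfl | hm
    · simp
    simp only [Pi.add_apply, Pi.single_apply, hm, if_false, add_zero, β, abs_of_nonneg hc]
    rw [sub_mul, sub_eq_add_neg, Real.exp_add, ← neg_mul]
    ring
  have hmono : ∀ m : ℤ, c * A₁ * (|(m : ℝ)| * Real.exp ((c - α) * |(m : ℝ)|)) ≤
      c * A₁ * (|(m : ℝ)| * Real.exp (-(α / 2) * |(m : ℝ)|)) := fun m => by
    gcongr
    linarith
  have hsum : Summable fun m : ℤ => c * A₁ * (|(m : ℝ)| * Real.exp ((c - α) * |(m : ℝ)|)) :=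
    (hS.mul_left (c * A₁)).of_nonneg_of_le (fun m => by positivity) hmono
  rw [eq_kernelOp_hamiltonianKernel ha hβ hV hH, ← tsum_mul_left]
  calc _ ≤ _ := L2.norm_expWeight_conj_kernelOp_sub_le c hφ _
          (hβ.add (hasSum_pi_single 0 Vbd).summable) hφL (hsum.congr fun m => (hterm m).symm)
    _ = ∑' m : ℤ, c * A₁ * (|(m : ℝ)| * Real.exp ((c - α) * |(m : ℝ)|)) := tsum_congr hterm
    _ ≤ _ := hsum.tsum_le_tsum hmono (hS.mul_left _)

end Hamiltonian

theorem stmt6_general (A₁ α Vbd : ℝ) (hA₁ : 0 < A₁) (hα : 0 < α) :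
    ∃ C c : ℝ, 0 < C ∧ 0 < c ∧
      ∀ (a : ℤ → ℂ) (V : ℤ → ℝ) (H : L2 →L[ℂ] L2) (z : ℂ),
        (∀ k : ℤ, ‖a k‖ ≤ A₁ * Real.exp (-α * |(k : ℝ)|)) →
        (∀ k : ℤ, a (-k) = starRingEnd ℂ (a k)) →
        (∀ n : ℤ, |V n| ≤ Vbd) →
        (∀ (u : L2) (n : ℤ), (H u) n = (∑' k : ℤ, a (n - k) * u k) + (V n : ℂ) * u n) →
        (∀ w ∈ spectrum ℂ H, 1 ≤ ‖z - w‖) →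
        ∀ j n : ℤ,
          ‖⟪(Ring.inverse (H - z • 1)) (dl j), dl n⟫_ℂ‖ ≤
            C * Real.exp (-c * |(n : ℝ) - (j : ℝ)|) := by
  set S := ∑' m : ℤ, |(m : ℝ)| * Real.exp (-(α / 2) * |(m : ℝ)|)
  have hAS : 0 ≤ A₁ * S := mul_nonneg hA₁.le (tsum_nonneg fun m => by positivity)
  obtain ⟨c₀, hc₀, hc₀S⟩ := exists_pos_mul_lt one_half_pos (A₁ * S)
  set c := min (α / 2) c₀
  have hc : 0 < c := lt_min (half_pos hα) hc₀
  refine ⟨2, c, two_pos, hc, fun a V H z ha hsa hV hH hz j n => ?_⟩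
  have hβ : Summable fun m : ℤ => A₁ * Real.exp (-α * |(m : ℝ)|) := by
    simpa using (summable_abs_pow_mul_exp_neg_mul_abs 0 hα).mul_left A₁
  obtain ⟨⟨T, hT⟩, hres⟩ := (isSelfAdjoint_of_hamiltonian ha hβ hsa hV hH).isStarNormal
    |>.norm_inverse_sub_smul_one_le one_pos hz
  rw [← hT, Ring.inverse_unit, inv_one] at hres
  set φ : ℤ → ℝ := fun k => min (dist k j) (dist n j)
  have hφ : ∀ k, |φ k| ≤ dist n j := fun k => by
    rw [abs_of_nonneg (le_min dist_nonneg dist_nonneg)]; exact min_le_right _ _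
  have hcomm := norm_expWeight_conj_hamiltonian_sub_le hα ha hV hH hc.le (min_le_left _ _) hφ
    ((LipschitzWith.dist_left j).min_const _)
  have hsmall : ‖(↑T⁻¹ : L2 →L[ℂ] L2)‖ * ‖(L2.expWeight c φ hφ : L2 →L[ℂ] L2) * T *
      ↑(L2.expWeight c φ hφ)⁻¹ - T‖ ≤ 1 * (1 / 2) := by
    rw [hT, Units.conj_sub_smul_one_sub]
    refine mul_le_mul hres (hcomm.trans ?_) (norm_nonneg _) zero_le_one
    nlinarith [min_le_right (α / 2) c₀]
  rw [← hT, Ring.inverse_unit, L2.norm_inner_dl_right]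
  calc _ ≤ 2 * ‖(↑T⁻¹ : L2 →L[ℂ] L2)‖ * Real.exp (c * (φ j - φ n)) :=
        L2.norm_inv_apply_single_le c hφ T (by simpa using hsmall) j n
    _ ≤ 2 * 1 * Real.exp (-c * |(n : ℝ) - (j : ℝ)|) := by
        rw [show c * (φ j - φ n) = -c * |(n : ℝ) - (j : ℝ)| by simp [φ, Int.dist_eq]]
        gcongr
    _ = 2 * Real.exp (-c * |(n : ℝ) - (j : ℝ)|) := by rw [mul_one]

/-- Combes–Thomas estimate for long-range operators:
for `H = A + V` with `(Au)_n = Σ_k a_{n-k} u_k`, `|a_k| ≤ A₁ e^{-α|k|}`,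
`a_{-k} = conj(a_k)`, `V` real bounded, and `z` at distance `≥ 1` from the
spectrum of `H`, there are `C, c > 0` depending only on `A₁, α, ‖V‖_∞` with
`|((H-z)⁻¹ δ_j, δ_n)| ≤ C e^{-c|n-j|}` for all `j, n`. -/
theorem stmt6 (A₁ α Vbd : ℝ) (hA₁ : 0 < A₁) (hα : 0 < α) (hVbd : 0 ≤ Vbd) :
    ∃ C c : ℝ, 0 < C ∧ 0 < c ∧
      ∀ (a : ℤ → ℂ) (V : ℤ → ℝ) (H : L2 →L[ℂ] L2) (z : ℂ),
        (∀ k : ℤ, ‖a k‖ ≤ A₁ * Real.exp (-α * |(k : ℝ)|)) →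
        (∀ k : ℤ, a (-k) = starRingEnd ℂ (a k)) →
        (∀ n : ℤ, |V n| ≤ Vbd) →
        (∀ (u : L2) (n : ℤ), (H u) n = (∑' k : ℤ, a (n - k) * u k) + (V n : ℂ) * u n) →
        (∀ w ∈ spectrum ℂ H, 1 ≤ ‖z - w‖) →
        ∀ j n : ℤ,
          ‖⟪(Ring.inverse (H - z • 1)) (dl j), dl n⟫_ℂ‖ ≤
            C * Real.exp (-c * |(n : ℝ) - (j : ℝ)|) :=
  stmt6_general A₁ α Vbd hA₁ hα
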